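/- For n ≥ 0 define φ_n(x) = ∫₀ˣ √(2n+1 - t²) dt. If |x|, |y| ≤ T ≤ √(2n+1)/2, then |φ_{n+1}(x) - φ_n(x) + φ_{n+1}(y) - φ_n(y)| ≤ 5T/√(2n+1). -/

import Mathlib

/-!
Raising `n` by one adds `2` under the square root. Since `√(a + h) - √a ≤ h / (2√a)` and, for
`t² ≤ T² ≤ (2n+1)/4`, the radicand `2n+1-t²` is at least `(2n+1)/4`, the integrand of
`φ_{n+1} - φ_n` is at most `2/√(2n+1)` on `[-T, T]`. Hence each of the two differences is at most
`2T/√(2n+1)`, and their sum at most `4T/√(2n+1)`.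
-/

open MeasureTheory Real

lemma Real.sqrt_add_sub_sqrt_le {a : ℝ} (h : ℝ) (ha : 0 < a) (hh : 0 ≤ h) :
    √(a + h) - √a ≤ h / (2 * √a) := by
  have hsa : 0 < √a := sqrt_pos.mpr ha
  have hmono : √a ≤ √(a + h) := sqrt_le_sqrt (by linarith)
  rw [le_div_iff₀ (by positivity)]
  nlinarith [sq_sqrt ha.le, sq_sqrt (by linarith : 0 ≤ a + h)]

lemma abs_sqrt_add_sub_sqrt_sub_sq_le {c h t : ℝ} (hc : 0 < c) (hh : 0 ≤ h)
    (ht : |t| ≤ √c / 2) :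
    |√(c + h - t ^ 2) - √(c - t ^ 2)| ≤ h / √c := by
  have hsc : 0 < √c := sqrt_pos.mpr hc
  have ht2 : t ^ 2 ≤ c / 4 := by
    have := sq_le_sq.mpr (ht.trans (le_abs_self _))
    rwa [div_pow, sq_sqrt hc.le, show (2 : ℝ) ^ 2 = 4 by norm_num] at this
  have hhalf : √c / 2 ≤ √(c - t ^ 2) :=
    le_sqrt_of_sq_le (by rw [div_pow, sq_sqrt hc.le]; linarith)
  have hrad : c + h - t ^ 2 = (c - t ^ 2) + h := by ring
  rw [hrad, abs_of_nonneg (sub_nonneg.mpr (sqrt_le_sqrt (by linarith)))]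
  calc √(c - t ^ 2 + h) - √(c - t ^ 2) ≤ h / (2 * √(c - t ^ 2)) :=
        sqrt_add_sub_sqrt_le h (by linarith) hh
    _ ≤ h / √c := div_le_div_of_nonneg_left hh hsc (by linarith)

lemma abs_integral_sqrt_add_sub_integral_sqrt_le {c h z : ℝ} (hc : 0 < c) (hh : 0 ≤ h)
    (hz : |z| ≤ √c / 2) :
    |(∫ t in (0 : ℝ)..z, √(c + h - t ^ 2)) - ∫ t in (0 : ℝ)..z, √(c - t ^ 2)|
      ≤ h / √c * |z| := by
  have hint : ∀ d : ℝ, IntervalIntegrable (fun t : ℝ => √(d - t ^ 2)) volume 0 z :=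
    fun d => (by fun_prop : Continuous fun t : ℝ => √(d - t ^ 2)).intervalIntegrable 0 z
  have hpointwise : ∀ t ∈ Set.uIoc (0 : ℝ) z,
      ‖√(c + h - t ^ 2) - √(c - t ^ 2)‖ ≤ h / √c := by
    intro t ht
    have htz : |t - 0| ≤ |z - 0| := Set.abs_sub_left_of_mem_uIcc (Set.uIoc_subset_uIcc ht)
    rw [sub_zero, sub_zero] at htz
    exact abs_sqrt_add_sub_sqrt_sub_sq_le hc hh (htz.trans hz)
  rw [← intervalIntegral.integral_sub (hint (c + h)) (hint c)]
  simpa using intervalIntegral.norm_integral_le_of_norm_le_const hpointwise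

theorem stmt7_general (n : ℕ)
    (φ : ℕ → ℝ → ℝ)
    (hφ : ∀ (m : ℕ) (x : ℝ), φ m x = ∫ t in (0:ℝ)..x, Real.sqrt (2 * (m : ℝ) + 1 - t ^ 2))
    (T x y : ℝ) (hT' : T ≤ Real.sqrt (2 * (n : ℝ) + 1) / 2)
    (hx : |x| ≤ T) (hy : |y| ≤ T) :
    |φ (n + 1) x - φ n x + φ (n + 1) y - φ n y|
      ≤ 5 * T / Real.sqrt (2 * (n : ℝ) + 1) := by
  set c : ℝ := 2 * n + 1
  have hc : 0 < c := by positivity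
  have hstep : ∀ z, |z| ≤ T → |φ (n + 1) z - φ n z| ≤ 2 / √c * T := by
    intro z hz
    have hcast : 2 * ((n + 1 : ℕ) : ℝ) + 1 = c + 2 := by push_cast; ring
    rw [hφ, hφ, hcast]
    exact (abs_integral_sqrt_add_sub_integral_sqrt_le hc zero_le_two (hz.trans hT')).trans
      (mul_le_mul_of_nonneg_left hz (by positivity))
  have hT : 0 ≤ T := (abs_nonneg x).trans hx
  calc |φ (n + 1) x - φ n x + φ (n + 1) y - φ n y|
      = |(φ (n + 1) x - φ n x) + (φ (n + 1) y - φ n y)| := by ring_nf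
    _ ≤ 2 / √c * T + 2 / √c * T := (abs_add_le _ _).trans (add_le_add (hstep x hx) (hstep y hy))
    _ ≤ 5 * T / √c := by
      rw [div_mul_eq_mul_div, ← add_div]
      gcongr
      linarith

/-- For `φ_n(x) = ∫₀ˣ √(2n+1 - t²) dt` and `|x|, |y| ≤ T ≤ √(2n+1)/2`:
`|φ_{n+1}(x) - φ_n(x) + φ_{n+1}(y) - φ_n(y)| ≤ 5T/√(2n+1)`. -/
theorem stmt7 (n : ℕ)
    (φ : ℕ → ℝ → ℝ)
    (hφ : ∀ (m : ℕ) (x : ℝ), φ m x = ∫ t in (0:ℝ)..x, Real.sqrt (2 * (m : ℝ) + 1 - t ^ 2))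
    (T x y : ℝ) (hT : 0 < T) (hT' : T ≤ Real.sqrt (2 * (n : ℝ) + 1) / 2)
    (hx : |x| ≤ T) (hy : |y| ≤ T) :
    |φ (n + 1) x - φ n x + φ (n + 1) y - φ n y|
      ≤ 5 * T / Real.sqrt (2 * (n : ℝ) + 1) :=
  stmt7_general n φ hφ T x y hT' hx hy
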